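/- arXiv:1910.08913 — 2 statements merged into one kernel-verified Lean document; each statement's English description precedes it below -/
import Mathlib

section
/- Setting S_0 := 1 and S_n := ∑_{(k,l)} c_n(k,l) for n ≥ 1 (so S_n is the total number of diagrams in T̃_n), for every n ≥ 0 one has 2·S_{n+1} = ∑_{k=0}^{n} binom(n,k)·(S_k + S_{k+1})·S_{n−k}; equivalently, the exponential generating function C(z) = ∑_{n≥0} S_n z^n/n! satisfies C(z)² = 2·C'(z) − C(z)·C'(z), i.e. C = 1 + C²·∫ dz/C. In particular S_0,S_1,S_2,S_3,S_4,S_5 = 1,1,3,17,147,1729. -/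
/-- Diagram-counting numbers `c n k l`: `c 1 1 1 = 1`, zero off `(1,1)` at `n = 1`,
zero whenever `k ≤ 0` or `l ≤ 0`, and satisfying the recurrence
`c (n+1) k l = k * c n k (l-1) + l * c n (k-1) l + (k+l-3) * c n (k-1) (l-1)`. -/
def c : ℕ → ℤ → ℤ → ℤ
  | 0, _, _ => 0
  | 1, k, l => if k = 1 ∧ l = 1 then 1 else 0
  | n + 2, k, l =>
      if k ≤ 0 ∨ l ≤ 0 then 0
      else k * c (n + 1) k (l - 1) + l * c (n + 1) (k - 1) l
            + (k + l - 3) * c (n + 1) (k - 1) (l - 1)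

/-- Total number of diagrams in T̃_n: S 0 = 1 and S n = ∑_{(k,l)} c_n(k,l) for n ≥ 1. -/
def S : ℕ → ℤ
  | 0 => 1
  | n + 1 => ∑ k ∈ Finset.Icc 1 (n + 1), ∑ l ∈ Finset.Icc 1 (n + 1), c (n + 1) (k : ℤ) (l : ℤ)

/-!
Put `f_n(x) = ∑ c_n(k,l) x^(k+l)`. The recurrence for `c` only involves `k + l`, and becomes
`f_{n+2} = x²(1+x) f_{n+1}' - x² f_{n+1}`, so `F(x,z) = ∑ f_n(x) zⁿ/n!` solves the linear PDE
`F_z = x²(1+x) F_x + x²(2 - F)`. Defining `y` by `(2 - F)(1 + y) = 1 + x`, the PDE says exactly that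
`y` is constant along the characteristics of `L = ∂_z - x²(1+x) ∂_x`. As `x²(1+x) = y² + y³` at
`z = 0` and `L` commutes with `∂_z`, both `y_z` and `y² + y³` solve `L u = 0` with the same initial
value, hence `y_z = y² + y³`. At `x = 1` the relations `(2 - C)(1 + y) = 2` and `y' = y² + y³`
eliminate `y` and leave `(2 - C) C' = C²` for `C(z) = ∑ Sₙ zⁿ/n!`, whose coefficients are the
claimed recurrence.
-/

open Finset

theorem c_eq_zero_of_nonpos {n : ℕ} {k l : ℤ} (h : k ≤ 0 ∨ l ≤ 0) : c n k l = 0 := by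
  match n with
  | 0 => rfl
  | 1 => simp only [c]; grind
  | n + 2 => rw [c, if_pos h]

theorem c_succ_succ (n : ℕ) (k l : ℤ) :
    c (n + 2) k l = k * c (n + 1) k (l - 1) + l * c (n + 1) (k - 1) l
      + (k + l - 3) * c (n + 1) (k - 1) (l - 1) := by
  rw [c]
  split_ifs with h
  · rw [c_eq_zero_of_nonpos, c_eq_zero_of_nonpos, c_eq_zero_of_nonpos] <;> omega
  · rfl

theorem c_comm (n : ℕ) (k l : ℤ) : c n k l = c n l k := by
  induction n generalizing k l with
  | zero => rfl
  | succ n ih =>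
    match n with
    | 0 => simp only [c]; grind
    | m + 1 => rw [c_succ_succ, c_succ_succ, ih l, ih (l - 1) k, ih (l - 1)]; ring

theorem c_eq_zero_of_lt_left {n : ℕ} {k : ℤ} (l : ℤ) (h : n < k) : c n k l = 0 := by
  induction n generalizing k l with
  | zero => rfl
  | succ n ih =>
    match n with
    | 0 => simp only [c]; grind
    | m + 1 =>
      push_cast at h
      rw [c_succ_succ, ih _ (by push_cast; omega), ih _ (by push_cast; omega),
        ih _ (by push_cast; omega)]
      ring

theorem c_eq_zero_of_outside_box {n : ℕ} {k l : ℤ} (h : k ≤ 0 ∨ l ≤ 0 ∨ n < k ∨ n < l) :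
    c n k l = 0 := by
  rcases h with h | h | h | h
  · exact c_eq_zero_of_nonpos (Or.inl h)
  · exact c_eq_zero_of_nonpos (Or.inr h)
  · exact c_eq_zero_of_lt_left l h
  · rw [c_comm, c_eq_zero_of_lt_left k h]

theorem Finset.sum_range_succ_shift {M : Type*} [AddCommMonoid M] {g : ℕ → M} {N : ℕ}
    (h0 : g 0 = 0) (hN : g N = 0) : ∑ i ∈ range N, g (i + 1) = ∑ i ∈ range N, g i := by
  have := (sum_range_succ' g N).symm.trans (sum_range_succ g N)
  rwa [h0, hN, add_zero, add_zero] at this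

section DiagramPolynomial

open Polynomial

theorem Polynomial.X_mul_derivative_X_pow {R : Type*} [CommSemiring R] (m : ℕ) :
    X * derivative (X ^ m : R[X]) = (m : R[X]) * X ^ m := by
  cases m with
  | zero => simp
  | succ m => rw [derivative_X_pow, C_eq_natCast, Nat.add_sub_cancel]; ring

noncomputable def diagramPoly : ℕ → ℚ[X]
  | 0 => 1
  | n + 1 => ∑ k ∈ range (n + 2), ∑ l ∈ range (n + 2), (c (n + 1) k l : ℚ[X]) * X ^ (k + l)

theorem diagramPoly_eq_sum {n N : ℕ} (h : n + 1 < N) :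
    diagramPoly (n + 1) = ∑ k ∈ range N, ∑ l ∈ range N, (c (n + 1) k l : ℚ[X]) * X ^ (k + l) := by
  have hsub : range (n + 2) ⊆ range N := range_subset_range.2 h
  rw [diagramPoly, sum_subset hsub fun k _ hk => ?_]
  · exact sum_congr rfl fun k _ => sum_subset hsub fun l _ hl => by
      rw [c_eq_zero_of_outside_box (by rw [mem_range] at hl; omega), Int.cast_zero, zero_mul]
  · refine sum_eq_zero fun l _ => ?_
    rw [c_eq_zero_of_outside_box (by rw [mem_range] at hk; omega), Int.cast_zero, zero_mul]

theorem diagramPoly_one : diagramPoly 1 = X ^ 2 := by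
  simp [diagramPoly, sum_range_succ, c]

theorem eval_one_diagramPoly (n : ℕ) : (diagramPoly n).eval 1 = S n := by
  cases n with
  | zero => simp [diagramPoly, S]
  | succ n =>
    have hsub : Icc 1 (n + 1) ⊆ range (n + 2) := fun k hk => by
      rw [mem_Icc] at hk; rw [mem_range]; omega
    simp only [diagramPoly, S, eval_finsetSum, eval_mul, eval_pow, eval_X, one_pow, mul_one,
      eval_intCast, Int.cast_sum]
    refine (sum_subset hsub fun k _ hk => sum_eq_zero fun l _ => ?_).symm.trans
      (sum_congr rfl fun k _ => (sum_subset hsub fun l _ hl => ?_).symm)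
    · rw [c_eq_zero_of_outside_box (by rw [mem_Icc] at hk; omega), Int.cast_zero]
    · rw [c_eq_zero_of_outside_box (by rw [mem_Icc] at hl; omega), Int.cast_zero]

theorem X_mul_derivative_diagramPoly {n N : ℕ} (h : n + 1 < N) :
    X * derivative (diagramPoly (n + 1)) = ∑ k ∈ range N, ∑ l ∈ range N,
      ((k : ℚ[X]) + (l : ℚ[X])) * (c (n + 1) k l : ℚ[X]) * X ^ (k + l) := by
  simp only [diagramPoly_eq_sum h, derivative_sum, mul_sum, derivative_intCast_mul]
  refine sum_congr rfl fun k _ => sum_congr rfl fun l _ => ?_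
  rw [mul_left_comm, X_mul_derivative_X_pow]
  push_cast
  ring

theorem diagramPoly_succ_succ_eq_sum (n : ℕ) :
    diagramPoly (n + 2) = ∑ k ∈ range (n + 3), ∑ l ∈ range (n + 3), (c (n + 1) k l : ℚ[X]) *
      (((k : ℚ[X]) + (l : ℚ[X])) * X ^ (k + l + 1)
        + ((k : ℚ[X]) + (l : ℚ[X]) - 1) * X ^ (k + l + 2)) := by
  set N := n + 3
  -- Each term of `c_succ_succ` is reindexed to `c (n + 1) k l`; the boundary terms of the shifts
  -- vanish because `c (n + 1)` is supported in `[1, n + 1]²` and `n + 1 < N - 1`.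
  have hzero {k l : ℤ} (h : k ≤ 0 ∨ l ≤ 0 ∨ n + 1 < k ∨ n + 1 < l) :
      (c (n + 1) k l : ℚ[X]) = 0 := by
    rw [c_eq_zero_of_outside_box (by push_cast; omega), Int.cast_zero]
  have hT1 : ∑ k ∈ range N, ∑ l ∈ range N,
      (k : ℚ[X]) * (c (n + 1) k (l - 1) : ℚ[X]) * X ^ (k + l)
      = ∑ k ∈ range N, ∑ l ∈ range N, (k : ℚ[X]) * (c (n + 1) k l : ℚ[X]) * X ^ (k + l + 1) := by
    refine sum_congr rfl fun k _ => (sum_range_succ_shift ?_ ?_).symm.trans ?_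
    · rw [hzero (by omega)]; ring
    · rw [hzero (by omega)]; ring
    · refine sum_congr rfl fun l _ => ?_
      push_cast; ring_nf
  have hT2 : ∑ k ∈ range N, ∑ l ∈ range N,
      (l : ℚ[X]) * (c (n + 1) (k - 1) l : ℚ[X]) * X ^ (k + l)
      = ∑ k ∈ range N, ∑ l ∈ range N, (l : ℚ[X]) * (c (n + 1) k l : ℚ[X]) * X ^ (k + l + 1) := by
    refine (sum_range_succ_shift ?_ ?_).symm.trans
      (sum_congr rfl fun k _ => sum_congr rfl fun l _ => ?_)
    · exact sum_eq_zero fun l _ => by rw [hzero (by omega)]; ring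
    · exact sum_eq_zero fun l _ => by rw [hzero (by omega)]; ring
    · push_cast; ring_nf
  have hT3 : ∑ k ∈ range N, ∑ l ∈ range N,
      ((k : ℚ[X]) + (l : ℚ[X]) - 3) * (c (n + 1) (k - 1) (l - 1) : ℚ[X]) * X ^ (k + l)
      = ∑ k ∈ range N, ∑ l ∈ range N,
        ((k : ℚ[X]) + (l : ℚ[X]) - 1) * (c (n + 1) k l : ℚ[X]) * X ^ (k + l + 2) := by
    refine (sum_range_succ_shift ?_ ?_).symm.trans (sum_congr rfl fun k _ =>
      (sum_range_succ_shift ?_ ?_).symm.trans (sum_congr rfl fun l _ => ?_))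
    · exact sum_eq_zero fun l _ => by rw [hzero (by omega)]; ring
    · exact sum_eq_zero fun l _ => by rw [hzero (by omega)]; ring
    · rw [hzero (by omega)]; ring
    · rw [hzero (by omega)]; ring
    · push_cast; ring_nf
  rw [diagramPoly_eq_sum (show n + 2 < N by omega)]
  simp only [c_succ_succ, Int.cast_add, Int.cast_mul, Int.cast_sub, Int.cast_natCast,
    Int.cast_ofNat, add_mul, sum_add_distrib]
  rw [hT1, hT2, hT3]
  simp only [← sum_add_distrib]
  refine sum_congr rfl fun k _ => sum_congr rfl fun l _ => ?_
  ring

theorem diagramPoly_succ_succ (n : ℕ) :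
    diagramPoly (n + 2) = X ^ 2 * (1 + X) * derivative (diagramPoly (n + 1))
      - X ^ 2 * diagramPoly (n + 1) := by
  rw [show X ^ 2 * (1 + X) * derivative (diagramPoly (n + 1))
      = X * (1 + X) * (X * derivative (diagramPoly (n + 1))) by ring,
    X_mul_derivative_diagramPoly (show n + 1 < n + 3 by omega),
    diagramPoly_eq_sum (show n + 1 < n + 3 by omega), diagramPoly_succ_succ_eq_sum,
    mul_sum, mul_sum, ← sum_sub_distrib]
  refine sum_congr rfl fun k _ => ?_
  rw [mul_sum, mul_sum, ← sum_sub_distrib]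
  refine sum_congr rfl fun l _ => ?_
  ring

end DiagramPolynomial

open PowerSeries
open scoped Polynomial

theorem PowerSeries.map_derivative {R S : Type*} [CommRing R] [CommRing S] (f : R →+* S)
    (φ : PowerSeries R) : map f (d⁄dX R φ) = d⁄dX S (map f φ) := by
  ext n; simp [coeff_derivative]

section Transport

variable {K A : Type*} [CommRing K] [CommRing A] [Algebra K A]

noncomputable def Derivation.mapCoeffsPowerSeries (d : Derivation K A A) :
    Derivation K (PowerSeries A) (PowerSeries A) :=
  Derivation.mk'
    { toFun := fun φ => PowerSeries.mk fun n => d (coeff n φ)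
      map_add' := fun φ ψ => by ext n; simp
      map_smul' := fun r φ => by ext n; simp }
    fun φ ψ => by
      ext n
      simp only [LinearMap.coe_mk, AddHom.coe_mk, coeff_mk, smul_eq_mul, map_add]
      rw [mul_comm ψ, coeff_mul, coeff_mul, coeff_mul, map_sum, ← sum_add_distrib]
      refine sum_congr rfl fun p _ => ?_
      rw [d.leibniz, smul_eq_mul, smul_eq_mul, coeff_mk, coeff_mk]
      ring

variable (d : Derivation K A A)

@[simp]
theorem Derivation.coeff_mapCoeffsPowerSeries (φ : PowerSeries A) (n : ℕ) :
    coeff n (d.mapCoeffsPowerSeries φ) = d (coeff n φ) :=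
  coeff_mk n fun n => d (coeff n φ)

/-- The transport operator `∂_z - q ∂_x` on `A⟦z⟧`, where `d` plays the role of `∂_x` on `A`. -/
noncomputable def transport (q : A) : Derivation K (PowerSeries A) (PowerSeries A) :=
  (d⁄dX A).restrictScalars K - C q • d.mapCoeffsPowerSeries

theorem transport_apply (q : A) (φ : PowerSeries A) :
    transport d q φ = d⁄dX A φ - C q * d.mapCoeffsPowerSeries φ := rfl

theorem coeff_transport (q : A) (φ : PowerSeries A) (n : ℕ) :
    coeff n (transport d q φ) = coeff (n + 1) φ * (n + 1) - q * d (coeff n φ) := by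
  simp [transport, coeff_derivative, coeff_C_mul]

theorem transport_C (q a : A) : transport d q (C a) = -C (q * d a) := by
  ext n : 1
  rw [coeff_transport]
  cases n <;> simp [coeff_C]

theorem transport_derivative (q : A) (φ : PowerSeries A) :
    transport d q (d⁄dX A φ) = d⁄dX A (transport d q φ) := by
  ext n
  simp only [coeff_transport, coeff_derivative, Nat.cast_add, Nat.cast_one, Derivation.leibniz,
    map_add, Derivation.map_natCast, Derivation.map_one_eq_zero, add_zero, smul_eq_mul, mul_zero,
    zero_add]
  ring

theorem eq_zero_of_transport_eq_zero [IsAddTorsionFree A] {q : A} {φ : PowerSeries A}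
    (hφ : transport d q φ = 0) (h0 : constantCoeff φ = 0) : φ = 0 := by
  ext n
  induction n with
  | zero => simpa using h0
  | succ n ih =>
    have h := congrArg (coeff n) hφ
    rw [coeff_transport, ih, map_zero, map_zero, mul_zero, sub_zero, mul_comm, ← Nat.cast_succ,
      ← nsmul_eq_mul, nsmul_eq_zero_iff_right n.succ_ne_zero] at h
    rw [h, map_zero]

end Transport

section ExponentialGeneratingFunction

variable {A B : Type*} [CommRing A] [Algebra ℚ A] [CommRing B] [Algebra ℚ B]

noncomputable def egf (a : ℕ → A) : PowerSeries A :=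
  PowerSeries.mk fun n => (n.factorial : ℚ)⁻¹ • a n

theorem coeff_egf (a : ℕ → A) (n : ℕ) : coeff n (egf a) = (n.factorial : ℚ)⁻¹ • a n :=
  coeff_mk _ _

theorem egf_injective : Function.Injective (egf : (ℕ → A) → PowerSeries A) := by
  intro a b h
  funext n
  have hn := congrArg (coeff n) h
  rw [coeff_egf, coeff_egf] at hn
  exact smul_right_injective A (inv_ne_zero (Nat.cast_ne_zero.2 n.factorial_ne_zero)) hn

theorem egf_add (a b : ℕ → A) : egf a + egf b = egf (a + b) := by
  ext n; simp [coeff_egf]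

theorem egf_mul (a b : ℕ → A) :
    egf a * egf b = egf fun n => ∑ k ∈ range (n + 1), (n.choose k : A) * a k * b (n - k) := by
  ext n
  rw [coeff_mul, Nat.sum_antidiagonal_eq_sum_range_succ_mk, coeff_egf, smul_sum]
  refine sum_congr rfl fun k hk => ?_
  have hq : ((k.factorial : ℚ))⁻¹ * ((n - k).factorial : ℚ)⁻¹
      = (n.factorial : ℚ)⁻¹ * n.choose k := by
    have hkn := mem_range_succ_iff.1 hk
    have hchoose : (n.choose k : ℚ) ≠ 0 := Nat.cast_ne_zero.2 (Nat.choose_pos hkn).ne'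
    rw [← Nat.choose_mul_factorial_mul_factorial hkn]
    push_cast
    field_simp
  have hqA := congrArg (algebraMap ℚ A) hq
  simp only [map_mul, map_natCast] at hqA
  simp only [coeff_egf, Algebra.smul_def]
  linear_combination (a k * b (n - k)) * hqA

theorem derivative_egf (a : ℕ → A) : d⁄dX A (egf a) = egf fun n => a (n + 1) := by
  ext n
  have hn : ((n : A) + 1) = algebraMap ℚ A (n + 1) := by simp
  rw [coeff_derivative, coeff_egf, coeff_egf, Algebra.smul_def, Algebra.smul_def, hn, mul_comm,
    ← mul_assoc, ← map_mul, Nat.factorial_succ]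
  congr 2
  push_cast
  field_simp

theorem map_egf (f : A →+* B) (a : ℕ → A) : map f (egf a) = egf (f ∘ a) := by
  ext n; simp [coeff_egf, map_rat_smul]

theorem Derivation.mapCoeffsPowerSeries_egf (d : Derivation ℚ A A) (a : ℕ → A) :
    d.mapCoeffsPowerSeries (egf a) = egf (d ∘ a) := by
  ext n; simp [coeff_egf]

end ExponentialGeneratingFunction

theorem two_sub_mul_derivation_eq_sq {K R : Type*} [CommRing K] [CommRing R] [Algebra K R]
    [IsDomain R] [NeZero (2 : R)] (D : Derivation K R R) {u y : R} (h : (2 - u) * (1 + y) = 2)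
    (hy : D y = y ^ 2 + y ^ 3) : (2 - u) * D u = u ^ 2 := by
  have hD := congrArg D h
  have h2 : D (2 : R) = 0 := by simpa using D.map_natCast 2
  rw [Derivation.leibniz, map_sub, map_add, h2, D.map_one_eq_zero, hy, smul_eq_mul,
    smul_eq_mul] at hD
  have hy0 : (1 + y) ^ 2 ≠ 0 :=
    pow_ne_zero 2 fun hy0 => two_ne_zero (h.symm.trans (by rw [hy0, mul_zero]))
  have hu : u * (1 + y) = 2 * y := by linear_combination -h
  have hDu : (1 + y) * D u = 2 * y ^ 2 := by linear_combination -hD + y ^ 2 * h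
  refine mul_right_cancel₀ hy0 ?_
  calc (2 - u) * D u * (1 + y) ^ 2 = ((2 - u) * (1 + y)) * ((1 + y) * D u) := by ring
    _ = (u * (1 + y)) ^ 2 := by rw [h, hDu, hu]; ring
    _ = u ^ 2 * (1 + y) ^ 2 := by ring

section DiagramSeries

local notation "∂ₓ" => (Polynomial.derivative' : Derivation ℚ ℚ[X] ℚ[X])
local notation "𝓛" => transport ∂ₓ (Polynomial.X ^ 2 * (1 + Polynomial.X))

noncomputable def diagramSeries : PowerSeries ℚ[X] := egf diagramPoly

theorem constantCoeff_diagramSeries : constantCoeff diagramSeries = 1 := by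
  rw [← coeff_zero_eq_constantCoeff_apply, diagramSeries, coeff_egf]; simp [diagramPoly]

theorem transport_diagramSeries :
    𝓛 diagramSeries = C (Polynomial.X ^ 2) * (2 - diagramSeries) := by
  rw [transport_apply, diagramSeries, derivative_egf, Derivation.mapCoeffsPowerSeries_egf,
    ← map_ofNat C 2]
  ext n : 1
  simp only [map_sub, coeff_egf, coeff_C_mul, coeff_C, Function.comp_apply,
    Polynomial.derivative'_apply]
  cases n with
  | zero =>
    simp only [Nat.factorial_zero, Nat.cast_one, inv_one, one_smul, zero_add, diagramPoly_one,
      show diagramPoly 0 = 1 from rfl, Polynomial.derivative_one, mul_zero, sub_zero, ↓reduceIte]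
    ring
  | succ m =>
    simp only [diagramPoly_succ_succ, Algebra.mul_smul_comm, Nat.add_eq_zero_iff, one_ne_zero,
      and_false, ↓reduceIte, zero_sub, mul_neg]
    module

theorem isUnit_two_sub_diagramSeries : IsUnit (2 - diagramSeries) := by
  rw [isUnit_iff_constantCoeff, map_sub, constantCoeff_diagramSeries, map_ofNat]
  norm_num

/-- The solution `y(x, z)` of `y_z = y² + y³`, `y(x, 0) = x` (see `derivative_flow`). -/
noncomputable def flow : PowerSeries ℚ[X] :=
  C (1 + Polynomial.X) * Ring.inverse (2 - diagramSeries) - 1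

theorem two_sub_diagramSeries_mul_one_add_flow :
    (2 - diagramSeries) * (1 + flow) = C (1 + Polynomial.X) := by
  rw [flow, add_sub_cancel, mul_left_comm,
    Ring.mul_inverse_cancel _ isUnit_two_sub_diagramSeries, mul_one]

theorem transport_flow : 𝓛 flow = 0 := by
  have hF : 𝓛 (2 - diagramSeries) = -(C (Polynomial.X ^ 2) * (2 - diagramSeries)) := by
    rw [map_sub, transport_diagramSeries, ← map_ofNat C 2, transport_C]
    simp
  have hprod := two_sub_diagramSeries_mul_one_add_flow
  have h := congrArg 𝓛 hprod
  rw [Derivation.leibniz, map_add, Derivation.map_one_eq_zero, zero_add, hF, transport_C] at h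
  simp only [smul_eq_mul, Polynomial.derivative'_apply, Polynomial.derivative_add,
    Polynomial.derivative_one, Polynomial.derivative_X, zero_add, mul_one, map_mul] at h
  refine (isUnit_two_sub_diagramSeries.mul_right_eq_zero).1 ?_
  linear_combination h + C (Polynomial.X ^ 2) * hprod

theorem constantCoeff_flow : constantCoeff flow = Polynomial.X := by
  have h := congrArg constantCoeff two_sub_diagramSeries_mul_one_add_flow
  rw [map_mul, map_sub, map_add, constantCoeff_diagramSeries, map_ofNat, map_one,
    constantCoeff_C] at h
  linear_combination h

theorem derivative_flow : d⁄dX ℚ[X] flow = flow ^ 2 + flow ^ 3 := by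
  rw [← sub_eq_zero]
  refine eq_zero_of_transport_eq_zero ∂ₓ (q := Polynomial.X ^ 2 * (1 + Polynomial.X)) ?_ ?_
  · rw [map_sub, transport_derivative, map_add, Derivation.leibniz_pow, Derivation.leibniz_pow,
      transport_flow]
    simp
  · have h := congrArg (coeff 0) transport_flow
    rw [coeff_transport, coeff_zero_eq_constantCoeff_apply, constantCoeff_flow] at h
    rw [map_sub, ← coeff_zero_eq_constantCoeff_apply, coeff_derivative, map_add, map_pow, map_pow,
      constantCoeff_flow]
    simp only [zero_add, CharP.cast_eq_zero, mul_one, Polynomial.derivative'_apply,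
      Polynomial.derivative_X, coeff_zero_eq_constantCoeff, constantCoeff_zero] at h
    linear_combination h

end DiagramSeries

theorem map_diagramSeries :
    map (Polynomial.evalRingHom 1) diagramSeries = egf fun n => (S n : ℚ) := by
  rw [diagramSeries, map_egf]
  congr 1
  funext n
  exact eval_one_diagramPoly n

theorem two_sub_egf_S_mul_derivative :
    (2 - egf fun n => (S n : ℚ)) * d⁄dX ℚ (egf fun n => (S n : ℚ))
      = (egf fun n => (S n : ℚ)) ^ 2 := by
  set y := map (Polynomial.evalRingHom 1) flow
  have h := congrArg (map (Polynomial.evalRingHom 1)) two_sub_diagramSeries_mul_one_add_flow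
  rw [map_mul, map_sub, map_add, map_one, map_ofNat, map_diagramSeries, map_C] at h
  have hy : d⁄dX ℚ y = y ^ 2 + y ^ 3 := by
    rw [← map_derivative, derivative_flow, map_add, map_pow, map_pow]
  have : NeZero (2 : PowerSeries ℚ) := ⟨fun h2 => by
    simpa [map_ofNat] using congrArg (constantCoeff (R := ℚ)) h2⟩
  refine two_sub_mul_derivation_eq_sq _ ?_ hy
  rw [h, Polynomial.coe_evalRingHom, Polynomial.eval_add, Polynomial.eval_one,
    Polynomial.eval_X, one_add_one_eq_two, map_ofNat]

theorem S_recurrence (n : ℕ) : 2 * S (n + 1)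
    = ∑ k ∈ Finset.range (n + 1), (Nat.choose n k : ℤ) * (S k + S (k + 1)) * S (n - k) := by
  have h := two_sub_egf_S_mul_derivative
  rw [derivative_egf] at h
  have h' : egf ((fun n => (S n : ℚ)) + fun n => (S (n + 1) : ℚ)) * egf (fun n => (S n : ℚ))
      = egf ((fun n => (S (n + 1) : ℚ)) + fun n => (S (n + 1) : ℚ)) := by
    rw [← egf_add, ← egf_add]
    linear_combination -h
  rw [egf_mul] at h'
  have := congrFun (egf_injective h') n
  simp only [Pi.add_apply, ← two_mul] at this
  exact_mod_cast this.symm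

/-- For every n ≥ 0, 2·S_{n+1} = ∑_{k=0}^{n} C(n,k)·(S_k + S_{k+1})·S_{n−k};
in particular S_0,…,S_5 = 1,1,3,17,147,1729. -/
theorem stmt2 :
    (∀ n : ℕ, 2 * S (n + 1)
        = ∑ k ∈ Finset.range (n + 1), (Nat.choose n k : ℤ) * (S k + S (k + 1)) * S (n - k)) ∧
    S 0 = 1 ∧ S 1 = 1 ∧ S 2 = 3 ∧ S 3 = 17 ∧ S 4 = 147 ∧ S 5 = 1729 :=
  ⟨S_recurrence, by decide, by decide, by decide, by decide, by decide, by decide⟩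
end

section
/- For all n ≥ 2 and m ≥ 1, the number of diagrams of size n in T̃_n with 2 rows and m columns is c_n(2,m) = (2^{m+1} − m − 2)·δ_{n−1,m} + (2^m − m − 1)·δ_{n,m}, where δ is the Kronecker delta; in particular c_n(2,m) = 0 unless m ∈ {n−1, n}. -/
lemma c_zero_left (n : ℕ) (l : ℤ) : c n 0 l = 0 := by
  rcases n with _ | _ | n <;> simp [c]

lemma c_zero_right (n : ℕ) (k : ℤ) : c n k 0 = 0 := by
  rcases n with _ | _ | n <;> simp [c]

lemma c_add_two (n : ℕ) {k l : ℤ} (hk : 0 < k) (hl : 0 < l) :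
    c (n + 2) k l = k * c (n + 1) k (l - 1) + l * c (n + 1) (k - 1) l
      + (k + l - 3) * c (n + 1) (k - 1) (l - 1) := by
  rw [c, if_neg (by omega)]

lemma c_succ_one (n : ℕ) (l : ℤ) : c (n + 1) 1 l = if l = n + 1 then 1 else 0 := by
  induction n generalizing l with
  | zero => simp [c]
  | succ n ih =>
    rcases le_or_gt l 0 with hl | hl
    · rw [c, if_pos (Or.inr hl), if_neg (by omega)]
    · rw [c_add_two n zero_lt_one hl, sub_self, c_zero_left, c_zero_left, ih]
      push_cast
      simp only [mul_zero, add_zero, one_mul, sub_eq_iff_eq_add]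

lemma c_two (n m : ℕ) :
    c n 2 m = (if m + 1 = n then (2 : ℤ) ^ (m + 1) - m - 2 else 0)
      + (if m = n then (2 : ℤ) ^ m - m - 1 else 0) := by
  induction n generalizing m with
  | zero => rcases m with _ | m <;> simp [c]
  | succ n ih =>
    rcases n with _ | n
    · rcases m with _ | _ | m <;> simp [c]
    rcases m with _ | m
    · simp [c_zero_right]
    rw [Nat.cast_succ, c_add_two n two_pos (by omega), add_sub_cancel_right,
      show (2 : ℤ) - 1 = 1 by norm_num, c_succ_one, c_succ_one, ih, pow_succ, pow_succ]
    push_cast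
    split_ifs <;> omega

theorem stmt6_general (n m : ℕ) :
    c n 2 (m : ℤ) = (2 ^ (m + 1) - (m : ℤ) - 2) * (if n - 1 = m then 1 else 0)
        + (2 ^ m - (m : ℤ) - 1) * (if n = m then 1 else 0)
      ∧ (m ≠ n - 1 → m ≠ n → c n 2 (m : ℤ) = 0) := by
  rw [c_two]
  refine ⟨?_, fun h₁ h₂ => by rw [if_neg (by omega), if_neg h₂, add_zero]⟩
  split_ifs <;> try omega
  -- the truncated `n - 1 = m` also holds at `n = m = 0`
  obtain rfl : m = 0 := by omega
  norm_num

/-- For all n ≥ 2 and m ≥ 1,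
c_n(2,m) = (2^{m+1}−m−2)·δ_{n−1,m} + (2^m−m−1)·δ_{n,m};
in particular c_n(2,m) = 0 unless m ∈ {n−1, n}. -/
theorem stmt6 (n m : ℕ) (hn : 2 ≤ n) (hm : 1 ≤ m) :
    c n 2 (m : ℤ) = (2 ^ (m + 1) - (m : ℤ) - 2) * (if n - 1 = m then 1 else 0)
        + (2 ^ m - (m : ℤ) - 1) * (if n = m then 1 else 0)
      ∧ (m ≠ n - 1 → m ≠ n → c n 2 (m : ℤ) = 0) :=
  stmt6_general n m
end
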